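/- Let (A, ∘, B) be a finite-dimensional quadratic Novikov algebra. Then there exist finitely many ideals A_1,…,A_r of (A,∘) such that A = A_1 ⊕ ⋯ ⊕ A_r, where each A_i is nondegenerate (B restricted to A_i × A_i is nondegenerate), each A_i contains no nonzero proper nondegenerate ideal of A, and B(A_i, A_j) = 0 for i ≠ j. -/

import Mathlib

/-!
The orthogonal complement of an ideal with respect to an invariant symmetric form is again an
ideal, and a nondegenerate subspace is complemented by its orthogonal. So a nondegenerate ideal
`S` that contains a nonzero proper nondegenerate ideal `I` splits as `I ⊕ (Iᗮ ∩ S)` into two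
smaller orthogonal nondegenerate ideals; induction on the dimension then decomposes `A` itself.
-/

open Module LinearMap.BilinForm

section

variable {k A : Type*} [Field k] [AddCommGroup A] [Module k A]

def IsIdeal (mul : A →ₗ[k] A →ₗ[k] A) (I : Submodule k A) : Prop :=
  ∀ a ∈ I, ∀ x : A, mul a x ∈ I ∧ mul x a ∈ I

def IsNondegOn (B : LinearMap.BilinForm k A) (I : Submodule k A) : Prop :=
  ∀ x ∈ I, (∀ y ∈ I, B x y = 0) → x = 0

def HasNoProperNondegIdeal (mul : A →ₗ[k] A →ₗ[k] A) (B : LinearMap.BilinForm k A)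
    (S : Submodule k A) : Prop :=
  ∀ I : Submodule k A, IsIdeal mul I → IsNondegOn B I → I ≤ S → I = ⊥ ∨ I = S

section

variable {mul : A →ₗ[k] A →ₗ[k] A} {B : LinearMap.BilinForm k A} {I J S : Submodule k A}

theorem IsIdeal.inf (hI : IsIdeal mul I) (hJ : IsIdeal mul J) : IsIdeal mul (I ⊓ J) :=
  fun a ha x => ⟨⟨(hI a ha.1 x).1, (hJ a ha.2 x).1⟩, ⟨(hI a ha.1 x).2, (hJ a ha.2 x).2⟩⟩

theorem IsIdeal.orthogonal (hB : B.IsSymm)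
    (hinv : ∀ a b c, B (mul a b) c = -(B b (mul a c + mul c a))) (hI : IsIdeal mul I) :
    IsIdeal mul (B.orthogonal I) := by
  intro a ha x
  constructor
  · intro c hc
    calc B c (mul a x) = B (mul a x) c := hB.eq _ _
      _ = -(B x (mul a c + mul c a)) := hinv a x c
      _ = B (mul c x) a := by rw [hinv, add_comm]
      _ = 0 := ha _ (hI c hc x).1
  · intro c hc
    calc B c (mul x a) = B (mul x a) c := hB.eq _ _
      _ = -(B a (mul x c + mul c x)) := hinv x a c
      _ = 0 := by
        rw [map_add, hB.eq_iff.1 (ha _ (hI c hc x).2), hB.eq_iff.1 (ha _ (hI c hc x).1),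
          add_zero, neg_zero]

theorem isNondegOn_iff_disjoint_orthogonal (hB : B.IsSymm) :
    IsNondegOn B I ↔ Disjoint I (B.orthogonal I) := by
  rw [Submodule.disjoint_def]
  refine ⟨fun h x hx hxo => h x hx fun y hy => hB.eq_iff.1 (hxo y hy),
    fun h x hx hxy => h x hx fun y hy => hB.eq_iff.1 (hxy y hy)⟩

theorem le_orthogonal_comm (hB : B.IsSymm) : J ≤ B.orthogonal I ↔ I ≤ B.orthogonal J :=
  ⟨fun h x hx _ hy => hB.eq_iff.1 (h hy x hx), fun h x hx _ hy => hB.eq_iff.1 (h hy x hx)⟩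

theorem iSupIndep_of_pairwise_le_orthogonal {ι : Type*} (hB : B.IsSymm) {P : ι → Submodule k A}
    (hnd : ∀ i, IsNondegOn B (P i)) (horth : Pairwise fun i j => P j ≤ B.orthogonal (P i)) :
    iSupIndep P :=
  iSupIndep_def.2 fun i => ((isNondegOn_iff_disjoint_orthogonal hB).1 (hnd i)).mono_right <|
    iSup₂_le fun _ hji => horth hji.symm

theorem orthogonal_inf_lt (hB : B.IsSymm) (hI : IsNondegOn B I) (hIbot : I ≠ ⊥)
    (hIS : I ≤ S) : B.orthogonal I ⊓ S < S := by
  refine inf_le_right.lt_of_ne fun hJS => hIbot ?_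
  have hIorth : I ≤ B.orthogonal I := hIS.trans (hJS ▸ inf_le_left)
  exact ((isNondegOn_iff_disjoint_orthogonal hB).1 hI).eq_bot_of_le hIorth

variable [FiniteDimensional k A]

theorem sup_orthogonal_inf_eq (hB : B.IsSymm) (hI : IsNondegOn B I) (hIS : I ≤ S) :
    I ⊔ (B.orthogonal I ⊓ S) = S := by
  have hcompl : IsCompl I (B.orthogonal I) :=
    (isCompl_orthogonal_iff_disjoint hB.isRefl).2 ((isNondegOn_iff_disjoint_orthogonal hB).1 hI)
  rw [← sup_inf_assoc_of_le _ hIS, hcompl.sup_eq_top, top_inf_eq]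

theorem isNondegOn_orthogonal_inf (hB : B.IsSymm) (hI : IsNondegOn B I) (hS : IsNondegOn B S)
    (hIS : I ≤ S) : IsNondegOn B (B.orthogonal I ⊓ S) := by
  intro x hx hxJ
  refine hS x hx.2 fun y hy => ?_
  rw [← sup_orthogonal_inf_eq hB hI hIS] at hy
  obtain ⟨i, hi, j, hj, rfl⟩ := Submodule.mem_sup.1 hy
  rw [map_add, hB.eq_iff.1 (hx.1 i hi), hxJ j hj, add_zero]

end

structure IsOrthogonalDecomposition (mul : A →ₗ[k] A →ₗ[k] A) (B : LinearMap.BilinForm k A)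
    (s : Finset (Submodule k A)) (S : Submodule k A) : Prop where
  nonempty : s.Nonempty
  sup_eq : s.sup id = S
  isIdeal : ∀ P ∈ s, IsIdeal mul P
  isNondegOn : ∀ P ∈ s, IsNondegOn B P
  hasNoProperNondegIdeal : ∀ P ∈ s, HasNoProperNondegIdeal mul B P
  pairwise_le_orthogonal : (s : Set (Submodule k A)).Pairwise fun P Q => Q ≤ B.orthogonal P

namespace IsOrthogonalDecomposition

variable {mul : A →ₗ[k] A →ₗ[k] A} {B : LinearMap.BilinForm k A} {I J S : Submodule k A}
  {s t : Finset (Submodule k A)}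

theorem singleton (hS : IsIdeal mul S) (hSnd : IsNondegOn B S)
    (hSirr : HasNoProperNondegIdeal mul B S) : IsOrthogonalDecomposition mul B {S} S where
  nonempty := Finset.singleton_nonempty S
  sup_eq := Finset.sup_singleton
  isIdeal := by simpa using hS
  isNondegOn := by simpa using hSnd
  hasNoProperNondegIdeal := by simpa using hSirr
  pairwise_le_orthogonal := by simp

theorem le_of_mem (hs : IsOrthogonalDecomposition mul B s S) {P : Submodule k A} (hP : P ∈ s) :
    P ≤ S :=
  hs.sup_eq ▸ Finset.le_sup (f := id) hP

theorem union (hB : B.IsSymm) (hs : IsOrthogonalDecomposition mul B s I)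
    (ht : IsOrthogonalDecomposition mul B t J) (hIJ : J ≤ B.orthogonal I) :
    IsOrthogonalDecomposition mul B (s ∪ t) (I ⊔ J) where
  nonempty := hs.nonempty.mono Finset.subset_union_left
  sup_eq := by rw [Finset.sup_union, hs.sup_eq, ht.sup_eq]
  isIdeal P hP := (Finset.mem_union.1 hP).elim (hs.isIdeal P) (ht.isIdeal P)
  isNondegOn P hP := (Finset.mem_union.1 hP).elim (hs.isNondegOn P) (ht.isNondegOn P)
  hasNoProperNondegIdeal P hP :=
    (Finset.mem_union.1 hP).elim (hs.hasNoProperNondegIdeal P) (ht.hasNoProperNondegIdeal P)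
  pairwise_le_orthogonal := by
    rw [Finset.coe_union, Set.pairwise_union]
    refine ⟨hs.pairwise_le_orthogonal, ht.pairwise_le_orthogonal, fun P hP Q hQ _ => ?_⟩
    have hQP : Q ≤ B.orthogonal P :=
      (ht.le_of_mem hQ).trans (hIJ.trans (orthogonal_le (hs.le_of_mem hP)))
    exact ⟨hQP, (le_orthogonal_comm hB).1 hQP⟩

end IsOrthogonalDecomposition

theorem exists_isOrthogonalDecomposition [FiniteDimensional k A] {mul : A →ₗ[k] A →ₗ[k] A}
    {B : LinearMap.BilinForm k A} (hB : B.IsSymm)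
    (hinv : ∀ a b c, B (mul a b) c = -(B b (mul a c + mul c a))) {S : Submodule k A}
    (hS : IsIdeal mul S) (hSnd : IsNondegOn B S) :
    ∃ s, IsOrthogonalDecomposition mul B s S := by
  induction hn : finrank k S using Nat.strong_induction_on generalizing S with
  | _ n ih =>
  by_cases hSirr : HasNoProperNondegIdeal mul B S
  · exact ⟨{S}, .singleton hS hSnd hSirr⟩
  obtain ⟨I, hI, hInd, hIS, hIbot, hIne⟩ : ∃ I : Submodule k A, IsIdeal mul I ∧
      IsNondegOn B I ∧ I ≤ S ∧ I ≠ ⊥ ∧ I ≠ S := by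
    simpa [HasNoProperNondegIdeal] using hSirr
  obtain ⟨s, hs⟩ := ih _ (hn ▸ Submodule.finrank_lt_finrank_of_lt (hIS.lt_of_ne hIne)) hI hInd rfl
  obtain ⟨t, ht⟩ := ih _ (hn ▸ Submodule.finrank_lt_finrank_of_lt
      (orthogonal_inf_lt hB hInd hIbot hIS)) ((hI.orthogonal hB hinv).inf hS)
      (isNondegOn_orthogonal_inf hB hInd hSnd hIS) rfl
  exact ⟨s ∪ t, sup_orthogonal_inf_eq hB hInd hIS ▸ hs.union hB ht inf_le_left⟩

end

theorem quadratic_novikov_decomposition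
    {k A : Type*} [Field k] [AddCommGroup A] [Module k A]
    [FiniteDimensional k A]
    (mul : A →ₗ[k] A →ₗ[k] A) (B : LinearMap.BilinForm k A)
    (hsym : ∀ a b, B a b = B b a)
    (hnd : ∀ a, (∀ b, B a b = 0) → a = 0)
    (hinv : ∀ a b c, B (mul a b) c = -(B b (mul a c + mul c a))) :
    ∃ (r : ℕ), 0 < r ∧ ∃ Ai : Fin r → Submodule k A,
      DirectSum.IsInternal Ai ∧
      (∀ i, ∀ a ∈ Ai i, ∀ x : A, mul a x ∈ Ai i ∧ mul x a ∈ Ai i) ∧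
      (∀ i, ∀ x ∈ Ai i, (∀ y ∈ Ai i, B x y = 0) → x = 0) ∧
      (∀ i, ∀ I : Submodule k A,
        (∀ a ∈ I, ∀ x : A, mul a x ∈ I ∧ mul x a ∈ I) →
        (∀ x ∈ I, (∀ y ∈ I, B x y = 0) → x = 0) →
        I ≤ Ai i → I = ⊥ ∨ I = Ai i) ∧
      (∀ i j, i ≠ j → ∀ x ∈ Ai i, ∀ y ∈ Ai j, B x y = 0) := by
  have hB : B.IsSymm := ⟨hsym⟩
  obtain ⟨s, hs⟩ := exists_isOrthogonalDecomposition hB hinv (S := ⊤)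
    (fun _ _ _ => ⟨Submodule.mem_top, Submodule.mem_top⟩)
    (fun x _ h => hnd x fun b => h b Submodule.mem_top)
  let e := s.equivFin
  have horth : Pairwise fun i j => (e.symm j : Submodule k A) ≤ B.orthogonal (e.symm i) :=
    fun i j hij => hs.pairwise_le_orthogonal (e.symm i).2 (e.symm j).2
      (Subtype.coe_injective.ne (e.symm.injective.ne hij))
  have hsup : ⨆ i, (e.symm i : Submodule k A) = ⊤ := by
    rw [e.symm.iSup_comp (g := fun P : s => (P : Submodule k A)), ← hs.sup_eq,
      Finset.sup_eq_iSup, iSup_subtype']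
    rfl
  refine ⟨s.card, hs.nonempty.card_pos, fun i => e.symm i, ?_, fun i => hs.isIdeal _ (e.symm i).2,
    fun i => hs.isNondegOn _ (e.symm i).2, fun i => hs.hasNoProperNondegIdeal _ (e.symm i).2,
    fun i j hij x hx y hy => horth hij hy x hx⟩
  rw [DirectSum.isInternal_submodule_iff_iSupIndep_and_iSup_eq_top]
  exact ⟨iSupIndep_of_pairwise_le_orthogonal hB (fun i => hs.isNondegOn _ (e.symm i).2) horth,
    hsup⟩
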